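/- (Theorem 4(c).) Under the hypotheses of Theorem 2 (closed-loop unicycle dynamics with the range-only controller ω = v/d + v·k₁·Ω(β) + v·k₂·((r − d)/r)·η(r − d), auxiliary state ż = −κ·z + (1/2)·r², β = −κ·z + (1/2)·r², v ≠ 0 constant, k₁, k₂, κ > 0, r(0) ∈ (r_i, r_o)), let α₁ : [0, ∞) → [0, ∞) be a strictly increasing continuous function with α₁(0) = 0 and α₁(|s|) ≤ ∫₀ˢ Ω(τ) dτ for all s ∈ ℝ. Then for all t ≥ 0, α₁(|β(t)|) ≤ V₂(0)/(d·k₁), where V₂(0) = (1/2)(ē_x(0)² + ē_y(0)²) + d·k₂·V_r(r(0) − d) + d·k₁·∫₀^{β(0)} Ω(τ) dτ. -/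

import Mathlib

/-- Range r(t) = √((x(t) − x_T)² + (y(t) − y_T)²). -/
noncomputable def rng (x y : ℝ → ℝ) (xT yT : ℝ) (t : ℝ) : ℝ :=
  Real.sqrt ((x t - xT) ^ 2 + (y t - yT) ^ 2)

/-- Transformed error ē_x(t) = (x(t) − x_T)·cos θ(t) + (y(t) − y_T)·sin θ(t). -/
noncomputable def ebx (x y θ : ℝ → ℝ) (xT yT : ℝ) (t : ℝ) : ℝ :=
  (x t - xT) * Real.cos (θ t) + (y t - yT) * Real.sin (θ t)

/-- Transformed error ē_y(t) = −(x(t) − x_T)·sin θ(t) + (y(t) − y_T)·cos θ(t) + d. -/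
noncomputable def eby (x y θ : ℝ → ℝ) (xT yT d : ℝ) (t : ℝ) : ℝ :=
  -(x t - xT) * Real.sin (θ t) + (y t - yT) * Real.cos (θ t) + d

/-- The asymmetric barrier Lyapunov function V_r. -/
noncomputable def Vr (δa δb e : ℝ) : ℝ :=
  if 0 < e then (1 / 2) * Real.log (δb ^ 2 / (δb ^ 2 - e ^ 2))
  else (1 / 2) * Real.log (δa ^ 2 / (δa ^ 2 - e ^ 2))

/-- η(e) = 1/(δ_b² − e²) for e > 0 and η(e) = 1/(δ_a² − e²) for e ≤ 0. -/
noncomputable def eta (δa δb e : ℝ) : ℝ :=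
  if 0 < e then 1 / (δb ^ 2 - e ^ 2) else 1 / (δa ^ 2 - e ^ 2)

/-- The estimation signal β(t) = −κ·z(t) + (1/2)·r(t)². -/
noncomputable def beta (x y : ℝ → ℝ) (z : ℝ → ℝ) (κ xT yT : ℝ) (t : ℝ) : ℝ :=
  -κ * z t + (1 / 2) * (rng x y xT yT t) ^ 2

/-!
`V₂` is a Lyapunov function of the closed loop: while the range stays in the annulus
`(rᵢ, rₒ)`, the controller makes the cross terms of the error, barrier and integral parts of
`V̇₂` cancel, leaving `V̇₂ = -d k₁ κ β Ω(β) ≤ 0`. The barrier term blows up at the boundary of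
the annulus, so the sublevel set `V₂ ≤ V₂(0)` confines the range to a closed sub-annulus;
therefore the range can never reach the boundary, and `V₂` is nonincreasing for all `t ≥ 0`.
All three parts of `V₂` are nonnegative, so `d k₁ ∫₀^β Ω ≤ V₂(t) ≤ V₂(0)`, and
`α₁(|β|) ≤ ∫₀^β Ω` gives the bound.
-/

open Set Real

lemma hasDerivAt_half_log_barrier {δ e : ℝ} (hδ : 0 < δ) (he : e ^ 2 < δ ^ 2) :
    HasDerivAt (fun u => (1 / 2) * log (δ ^ 2 / (δ ^ 2 - u ^ 2))) (e / (δ ^ 2 - e ^ 2)) e := by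
  have hne : δ ^ 2 - e ^ 2 ≠ 0 := by nlinarith
  have hden : HasDerivAt (fun u : ℝ => δ ^ 2 - u ^ 2) (-(2 * e)) e := by
    simpa using (hasDerivAt_pow 2 e).const_sub (δ ^ 2)
  refine ((((hasDerivAt_const e (δ ^ 2)).div hden hne).log
    (div_ne_zero (by positivity) hne)).const_mul (1 / 2 : ℝ)).congr_deriv ?_
  simp only [Pi.div_apply]
  field_simp
  ring

lemma abs_le_of_half_log_barrier_le {δ e M : ℝ} (hδ : 0 < δ) (he : |e| < δ)
    (h : (1 / 2) * log (δ ^ 2 / (δ ^ 2 - e ^ 2)) ≤ M) :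
    |e| ≤ δ * √(1 - exp (-(2 * M))) := by
  have hgap : 0 < δ ^ 2 - e ^ 2 := by nlinarith [sq_abs e, abs_nonneg e]
  have hexp : exp (-(2 * M)) ≤ (δ ^ 2 - e ^ 2) / δ ^ 2 := by
    rw [← le_log_iff_exp_le (by positivity), ← inv_div, log_inv]
    linarith
  rw [le_div_iff₀ (by positivity)] at hexp
  calc |e| ≤ √(δ ^ 2 * (1 - exp (-(2 * M)))) := abs_le_sqrt (by nlinarith)
    _ = δ * √(1 - exp (-(2 * M))) := by rw [sqrt_mul (sq_nonneg δ), sqrt_sq hδ.le]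

section Barrier

variable {δa δb : ℝ}

lemma hasDerivAt_Vr (ha : 0 < δa) (hb : 0 < δb) {e : ℝ} (he : e ∈ Ioo (-δa) δb) :
    HasDerivAt (Vr δa δb) (e * eta δa δb e) e := by
  rcases lt_trichotomy e 0 with hneg | rfl | hpos
  · have hVr : Vr δa δb =ᶠ[nhds e] fun u => (1 / 2) * log (δa ^ 2 / (δa ^ 2 - u ^ 2)) := by
      filter_upwards [Iio_mem_nhds hneg] with u hu
      simp [Vr, not_lt.2 (mem_Iio.1 hu).le]
    refine ((hasDerivAt_half_log_barrier ha (by nlinarith [he.1])).congr_of_eventuallyEq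
      hVr).congr_deriv ?_
    simp [eta, not_lt.2 hneg.le, div_eq_mul_inv]
  · -- both branches vanish to first order at the junction `e = 0`
    have hl : HasDerivWithinAt (Vr δa δb) 0 (Iic 0) 0 := by
      refine ((hasDerivAt_half_log_barrier ha (by nlinarith)).hasDerivWithinAt).congr
        (fun u hu => by simp [Vr, not_lt.2 (mem_Iic.1 hu)]) (by simp [Vr]) |>.congr_deriv ?_
      simp
    have hr : HasDerivWithinAt (Vr δa δb) 0 (Ioi 0) 0 := by
      refine ((hasDerivAt_half_log_barrier hb (by nlinarith)).hasDerivWithinAt).congr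
        (fun u hu => by simp [Vr, mem_Ioi.1 hu]) (by simp [Vr, ha.ne', hb.ne']) |>.congr_deriv ?_
      simp
    simpa [Iic_union_Ioi, hasDerivWithinAt_univ] using hl.union hr
  · have hVr : Vr δa δb =ᶠ[nhds e] fun u => (1 / 2) * log (δb ^ 2 / (δb ^ 2 - u ^ 2)) := by
      filter_upwards [Ioi_mem_nhds hpos] with u hu
      simp [Vr, mem_Ioi.1 hu]
    refine ((hasDerivAt_half_log_barrier hb (by nlinarith [he.2])).congr_of_eventuallyEq
      hVr).congr_deriv ?_
    simp [eta, hpos, div_eq_mul_inv]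

lemma Vr_nonneg (ha : 0 < δa) (hb : 0 < δb) {e : ℝ} (he : e ∈ Ioo (-δa) δb) :
    0 ≤ Vr δa δb e := by
  unfold Vr
  split_ifs
  all_goals
    refine mul_nonneg (by norm_num) (log_nonneg ?_)
    rw [one_le_div (by nlinarith [he.1, he.2])]
    nlinarith

lemma exists_Icc_of_Vr_le (ha : 0 < δa) (hb : 0 < δb) (M : ℝ) :
    ∃ a b, -δa < a ∧ b < δb ∧ ∀ e ∈ Ioo (-δa) δb, Vr δa δb e ≤ M → e ∈ Icc a b := by
  set s := √(1 - exp (-(2 * M)))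
  have hs0 : 0 ≤ s := sqrt_nonneg _
  have hs1 : s < 1 := by rw [sqrt_lt' one_pos]; linarith [exp_pos (-(2 * M))]
  refine ⟨-(δa * s), δb * s, by nlinarith, by nlinarith, fun e he hV => ?_⟩
  unfold Vr at hV
  split_ifs at hV with hpos
  · have := abs_le_of_half_log_barrier_le hb (by rw [abs_of_pos hpos]; exact he.2) hV
    rw [abs_of_pos hpos] at this
    exact ⟨by nlinarith, this⟩
  · push Not at hpos
    have := abs_le_of_half_log_barrier_le ha (by rw [abs_of_nonpos hpos]; linarith [he.1]) hV
    rw [abs_of_nonpos hpos] at this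
    exact ⟨by linarith, by nlinarith⟩

end Barrier

section Kinematics

variable {x y θ : ℝ → ℝ} {xT yT v ω t : ℝ}

lemma rng_sq (x y : ℝ → ℝ) (xT yT t : ℝ) :
    rng x y xT yT t ^ 2 = (x t - xT) ^ 2 + (y t - yT) ^ 2 :=
  sq_sqrt (by positivity)

lemma continuousAt_rng (hx : ContinuousAt x t) (hy : ContinuousAt y t) :
    ContinuousAt (rng x y xT yT) t := by
  unfold rng
  fun_prop

lemma hasDerivAt_dist_sq (hx : HasDerivAt x (v * cos (θ t)) t)
    (hy : HasDerivAt y (v * sin (θ t)) t) :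
    HasDerivAt (fun s => (x s - xT) ^ 2 + (y s - yT) ^ 2) (2 * v * ebx x y θ xT yT t) t := by
  refine (((hx.sub_const xT).pow 2).add ((hy.sub_const yT).pow 2)).congr_deriv ?_
  simp only [ebx]
  push_cast
  ring

lemma hasDerivAt_rng (hx : HasDerivAt x (v * cos (θ t)) t)
    (hy : HasDerivAt y (v * sin (θ t)) t) (hr : rng x y xT yT t ≠ 0) :
    HasDerivAt (rng x y xT yT) (v * ebx x y θ xT yT t / rng x y xT yT t) t := by
  have hq : (x t - xT) ^ 2 + (y t - yT) ^ 2 ≠ 0 := by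
    rw [← rng_sq]; exact pow_ne_zero 2 hr
  refine ((hasDerivAt_dist_sq hx hy).sqrt hq).congr_deriv ?_
  change _ / (2 * rng x y xT yT t) = _
  field_simp

lemma hasDerivAt_beta {z : ℝ → ℝ} {κ : ℝ} (hx : HasDerivAt x (v * cos (θ t)) t)
    (hy : HasDerivAt y (v * sin (θ t)) t)
    (hz : HasDerivAt z (-κ * z t + (1 / 2) * rng x y xT yT t ^ 2) t) :
    HasDerivAt (beta x y z κ xT yT) (-κ * beta x y z κ xT yT t + v * ebx x y θ xT yT t) t := by
  have hβ : beta x y z κ xT yT =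
      fun s => -κ * z s + (1 / 2) * ((x s - xT) ^ 2 + (y s - yT) ^ 2) := by
    funext s
    rw [beta, rng_sq]
  rw [hβ]
  refine ((hz.const_mul (-κ)).add ((hasDerivAt_dist_sq hx hy).const_mul (1 / 2))).congr_deriv ?_
  simp only [rng_sq]
  ring

lemma hasDerivAt_ebx {d : ℝ} (hx : HasDerivAt x (v * cos (θ t)) t)
    (hy : HasDerivAt y (v * sin (θ t)) t) (hθ : HasDerivAt θ ω t) :
    HasDerivAt (ebx x y θ xT yT) (v + ω * (eby x y θ xT yT d t - d)) t := by
  refine (((hx.sub_const xT).mul hθ.cos).add ((hy.sub_const yT).mul hθ.sin)).congr_deriv ?_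
  simp only [eby]
  linear_combination v * sin_sq_add_cos_sq (θ t)

lemma hasDerivAt_eby {d : ℝ} (hx : HasDerivAt x (v * cos (θ t)) t)
    (hy : HasDerivAt y (v * sin (θ t)) t) (hθ : HasDerivAt θ ω t) :
    HasDerivAt (eby x y θ xT yT d) (-ω * ebx x y θ xT yT t) t := by
  refine ((((hx.sub_const xT).neg).mul hθ.sin).add ((hy.sub_const yT).mul hθ.cos)).add_const d
    |>.congr_deriv ?_
  simp only [ebx, Pi.neg_apply]
  ring

lemma hasDerivAt_half_sq_errors {d : ℝ} (hx : HasDerivAt x (v * cos (θ t)) t)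
    (hy : HasDerivAt y (v * sin (θ t)) t) (hθ : HasDerivAt θ ω t) :
    HasDerivAt (fun s => (1 / 2) * (ebx x y θ xT yT s ^ 2 + eby x y θ xT yT d s ^ 2))
      (ebx x y θ xT yT t * (v - d * ω)) t := by
  refine ((((hasDerivAt_ebx (d := d) hx hy hθ).pow 2).add
    ((hasDerivAt_eby hx hy hθ).pow 2)).const_mul (1 / 2)).congr_deriv ?_
  push_cast
  ring

end Kinematics

lemma antitoneOn_of_hasDerivAt_nonpos {D : Set ℝ} {f f' : ℝ → ℝ} (hD : Convex ℝ D)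
    (hf : ∀ x ∈ D, HasDerivAt f (f' x) x) (hf' : ∀ x ∈ D, f' x ≤ 0) : AntitoneOn f D :=
  antitoneOn_of_hasDerivWithinAt_nonpos hD (fun x hx => (hf x hx).continuousAt.continuousWithinAt)
    (fun x hx => (hf x (interior_subset hx)).hasDerivWithinAt)
    (fun x hx => hf' x (interior_subset hx))

lemma forall_mem_of_antitone_barrier {X : Type*} [TopologicalSpace X] {r : ℝ → X}
    {W W' : ℝ → ℝ} {U K : Set X} (hU : IsOpen U) (hK : IsClosed K) (hKU : K ⊆ U)
    (hr : ContinuousOn r (Ici 0)) (hW : ∀ t ≥ 0, r t ∈ U → HasDerivAt W (W' t) t)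
    (hW' : ∀ t ≥ 0, r t ∈ U → W' t ≤ 0) (hsub : ∀ t ≥ 0, r t ∈ U → W t ≤ W 0 → r t ∈ K)
    (h0 : r 0 ∈ U) : ∀ t ≥ 0, r t ∈ U := by
  by_contra! ⟨t, ht, hout⟩
  set S := Ici 0 ∩ r ⁻¹' Uᶜ
  have hSbdd : BddBelow S := ⟨0, fun _ hs => hs.1⟩
  set τ := sInf S
  have hτ : τ ∈ S :=
    (hr.preimage_isClosed_of_isClosed isClosed_Ici hU.isClosed_compl).csInf_mem ⟨t, ht, hout⟩ hSbdd
  have hτpos : 0 < τ := lt_of_le_of_ne hτ.1 fun h => hτ.2 (h ▸ h0)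
  have hbefore : ∀ s ∈ Ico 0 τ, r s ∈ U := fun s hs =>
    by_contra fun h => (csInf_le hSbdd ⟨hs.1, h⟩).not_gt hs.2
  have hanti : AntitoneOn W (Ico 0 τ) := antitoneOn_of_hasDerivAt_nonpos (convex_Ico 0 τ)
    (fun s hs => hW s hs.1 (hbefore s hs)) (fun s hs => hW' s hs.1 (hbefore s hs))
  have hmaps : MapsTo r (Ico 0 τ) K := fun s hs =>
    hsub s hs.1 (hbefore s hs) (hanti ⟨le_rfl, hτpos⟩ hs hs.1)
  have hτK : r τ ∈ K := by
    rw [← hK.closure_eq]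
    refine ((hr τ hτ.1).mono Ico_subset_Ici_self).mem_closure ?_ hmaps
    rw [closure_Ico hτpos.ne]
    exact right_mem_Icc.2 hτ.1
  exact hτ.2 (hKU hτK)

lemma intervalIntegral_nonneg_of_mul_nonneg {Ω : ℝ → ℝ} (h0 : Ω 0 = 0) (hΩ : ∀ s, 0 ≤ s * Ω s)
    (s : ℝ) : 0 ≤ ∫ τ in (0 : ℝ)..s, Ω τ := by
  rcases le_total 0 s with hs | hs
  · refine intervalIntegral.integral_nonneg hs fun u hu => ?_
    rcases hu.1.eq_or_lt with rfl | hu0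
    · exact h0.ge
    · exact nonneg_of_mul_nonneg_right (hΩ u) hu0
  · rw [intervalIntegral.integral_symm, ← intervalIntegral.integral_neg]
    refine intervalIntegral.integral_nonneg hs fun u hu => neg_nonneg.2 ?_
    rcases hu.2.eq_or_lt with rfl | hu0
    · exact h0.le
    · nlinarith [hΩ u]

noncomputable def lyapunovV2 (x y θ z Ω : ℝ → ℝ) (d k1 k2 κ ri ro xT yT t : ℝ) : ℝ :=
  (1 / 2) * (ebx x y θ xT yT t ^ 2 + eby x y θ xT yT d t ^ 2) +
    d * k2 * Vr (d - ri) (ro - d) (rng x y xT yT t - d) +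
    d * k1 * ∫ τ in (0 : ℝ)..beta x y z κ xT yT t, Ω τ

section Lyapunov

variable {x y θ z Ω : ℝ → ℝ} {v d k1 k2 κ ri ro xT yT t : ℝ}

lemma hasDerivAt_lyapunovV2 (hΩ : Continuous Ω) (hri : 0 < ri) (hrid : ri < d)
    (hdro : d < ro) (hr : rng x y xT yT t ∈ Ioo ri ro)
    (hx : HasDerivAt x (v * cos (θ t)) t) (hy : HasDerivAt y (v * sin (θ t)) t)
    (hz : HasDerivAt z (-κ * z t + (1 / 2) * rng x y xT yT t ^ 2) t)
    (hθ : HasDerivAt θ (v / d + v * k1 * Ω (beta x y z κ xT yT t) +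
        v * k2 * ((rng x y xT yT t - d) / rng x y xT yT t) *
          eta (d - ri) (ro - d) (rng x y xT yT t - d)) t) :
    HasDerivAt (lyapunovV2 x y θ z Ω d k1 k2 κ ri ro xT yT)
      (-(d * k1 * κ * beta x y z κ xT yT t * Ω (beta x y z κ xT yT t))) t := by
  have hr0 : rng x y xT yT t ≠ 0 := (hri.trans hr.1).ne'
  have hd0 : d ≠ 0 := (hri.trans hrid).ne'
  have hVr := (hasDerivAt_Vr (sub_pos.2 hrid) (sub_pos.2 hdro)
    ⟨by linarith [hr.1], by linarith [hr.2]⟩).comp t ((hasDerivAt_rng hx hy hr0).sub_const d)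
  have hF := (hΩ.integral_hasStrictDerivAt 0 _).hasDerivAt.comp t (hasDerivAt_beta hx hy hz)
  refine (((hasDerivAt_half_sq_errors hx hy hθ).add (hVr.const_mul (d * k2))).add
    (hF.const_mul (d * k1))).congr_deriv ?_
  field_simp
  ring

lemma mul_Vr_le_lyapunovV2 (hdk1 : 0 ≤ d * k1)
    (hF : 0 ≤ ∫ τ in (0 : ℝ)..beta x y z κ xT yT t, Ω τ) :
    d * k2 * Vr (d - ri) (ro - d) (rng x y xT yT t - d) ≤
      lyapunovV2 x y θ z Ω d k1 k2 κ ri ro xT yT t := by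
  unfold lyapunovV2
  nlinarith [sq_nonneg (ebx x y θ xT yT t), sq_nonneg (eby x y θ xT yT d t), mul_nonneg hdk1 hF]

lemma mul_integral_le_lyapunovV2 (hdk2 : 0 ≤ d * k2) (hrid : ri < d) (hdro : d < ro)
    (hr : rng x y xT yT t ∈ Ioo ri ro) :
    d * k1 * ∫ τ in (0 : ℝ)..beta x y z κ xT yT t, Ω τ ≤
      lyapunovV2 x y θ z Ω d k1 k2 κ ri ro xT yT t := by
  have hVr : 0 ≤ Vr (d - ri) (ro - d) (rng x y xT yT t - d) :=
    Vr_nonneg (sub_pos.2 hrid) (sub_pos.2 hdro) ⟨by linarith [hr.1], by linarith [hr.2]⟩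
  unfold lyapunovV2
  nlinarith [sq_nonneg (ebx x y θ xT yT t), sq_nonneg (eby x y θ xT yT d t), mul_nonneg hdk2 hVr]

lemma exists_isClosed_of_lyapunovV2_le (hdk1 : 0 ≤ d * k1) (hdk2 : 0 < d * k2)
    (hrid : ri < d) (hdro : d < ro) (hF : ∀ s, 0 ≤ ∫ τ in (0 : ℝ)..s, Ω τ) (C : ℝ) :
    ∃ K, IsClosed K ∧ K ⊆ Ioo ri ro ∧ ∀ t, rng x y xT yT t ∈ Ioo ri ro →
      lyapunovV2 x y θ z Ω d k1 k2 κ ri ro xT yT t ≤ C → rng x y xT yT t ∈ K := by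
  obtain ⟨a, b, ha, hb, hab⟩ := exists_Icc_of_Vr_le (sub_pos.2 hrid) (sub_pos.2 hdro) (C / (d * k2))
  refine ⟨Icc (d + a) (d + b), isClosed_Icc,
    fun s hs => ⟨by linarith [hs.1], by linarith [hs.2]⟩, fun t hr hC => ?_⟩
  have hVr : Vr (d - ri) (ro - d) (rng x y xT yT t - d) ≤ C / (d * k2) := by
    have hV2 : d * k2 * Vr (d - ri) (ro - d) (rng x y xT yT t - d) ≤
        lyapunovV2 x y θ z Ω d k1 k2 κ ri ro xT yT t := mul_Vr_le_lyapunovV2 hdk1 (hF _)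
    rw [le_div_iff₀ hdk2]
    linarith
  have he := hab _ ⟨by linarith [hr.1], by linarith [hr.2]⟩ hVr
  exact ⟨by linarith [he.1], by linarith [he.2]⟩

end Lyapunov

theorem theorem4c_beta_bound_general
    (x y θ z : ℝ → ℝ) (Ω α₁ : ℝ → ℝ) (v d k1 k2 κ ri ro xT yT : ℝ)
    (hΩcont : Continuous Ω) (hΩ0 : Ω 0 = 0) (hΩpos : ∀ s : ℝ, s ≠ 0 → 0 < s * Ω s)
    (hα₁le : ∀ s : ℝ, α₁ |s| ≤ ∫ τ in (0 : ℝ)..s, Ω τ)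
    (hri : 0 < ri) (hrid : ri < d) (hdro : d < ro)
    (hk1 : 0 < k1) (hk2 : 0 < k2) (hκ : 0 < κ)
    (hxdiff : ∀ t ≥ (0 : ℝ), DifferentiableAt ℝ x t)
    (hydiff : ∀ t ≥ (0 : ℝ), DifferentiableAt ℝ y t)
    (hclosedloop : ∀ t ≥ (0 : ℝ), rng x y xT yT t ∈ Set.Ioo ri ro →
      HasDerivAt x (v * Real.cos (θ t)) t ∧
      HasDerivAt y (v * Real.sin (θ t)) t ∧
      HasDerivAt z (-κ * z t + (1 / 2) * (rng x y xT yT t) ^ 2) t ∧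
      HasDerivAt θ (v / d + v * k1 * Ω (beta x y z κ xT yT t) +
        v * k2 * ((rng x y xT yT t - d) / rng x y xT yT t) *
          eta (d - ri) (ro - d) (rng x y xT yT t - d)) t)
    (hr0 : rng x y xT yT 0 ∈ Set.Ioo ri ro)
    (V20 : ℝ)
    (hV20 : V20 = (1 / 2) * ((ebx x y θ xT yT 0) ^ 2 + (eby x y θ xT yT d 0) ^ 2) +
      d * k2 * Vr (d - ri) (ro - d) (rng x y xT yT 0 - d) +
      d * k1 * ∫ τ in (0 : ℝ)..(beta x y z κ xT yT 0), Ω τ) :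
    ∀ t ≥ (0 : ℝ), α₁ |beta x y z κ xT yT t| ≤ V20 / (d * k1) := by
  have hd : 0 < d := hri.trans hrid
  have hdk1 : 0 < d * k1 := mul_pos hd hk1
  have hdk2 : 0 < d * k2 := mul_pos hd hk2
  have hΩsign : ∀ s, 0 ≤ s * Ω s := fun s =>
    (eq_or_ne s 0).elim (fun hs => by simp [hs]) fun hs => (hΩpos s hs).le
  set W := lyapunovV2 x y θ z Ω d k1 k2 κ ri ro xT yT
  set β := beta x y z κ xT yT
  have hW : ∀ t ≥ 0, rng x y xT yT t ∈ Ioo ri ro →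
      HasDerivAt W (-(d * k1 * κ * β t * Ω (β t))) t := fun t ht hr => by
    obtain ⟨hx, hy, hz, hθ⟩ := hclosedloop t ht hr
    exact hasDerivAt_lyapunovV2 hΩcont hri hrid hdro hr hx hy hz hθ
  have hW' : ∀ t ≥ 0, rng x y xT yT t ∈ Ioo ri ro → -(d * k1 * κ * β t * Ω (β t)) ≤ 0 :=
    fun t _ _ => by nlinarith [hΩsign (β t), mul_pos hdk1 hκ]
  obtain ⟨K, hK, hKU, hsub⟩ := exists_isClosed_of_lyapunovV2_le hdk1.le hdk2 hrid hdro
    (intervalIntegral_nonneg_of_mul_nonneg hΩ0 hΩsign) (W 0)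
  have hinv := forall_mem_of_antitone_barrier isOpen_Ioo hK hKU
    (fun s hs => (continuousAt_rng (hxdiff s hs).continuousAt
      (hydiff s hs).continuousAt).continuousWithinAt) hW hW' (fun s _ => hsub s) hr0
  have hanti : AntitoneOn W (Ici 0) := antitoneOn_of_hasDerivAt_nonpos (convex_Ici 0)
    (fun s hs => hW s hs (hinv s hs)) (fun s hs => hW' s hs (hinv s hs))
  intro t ht
  calc α₁ |β t| ≤ ∫ τ in (0 : ℝ)..β t, Ω τ := hα₁le _
    _ ≤ W t / (d * k1) := by
      rw [le_div_iff₀ hdk1, mul_comm]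
      exact mul_integral_le_lyapunovV2 hdk2.le hrid hdro (hinv t ht)
    _ ≤ W 0 / (d * k1) := div_le_div_of_nonneg_right (hanti self_mem_Ici ht ht) hdk1.le
    _ = V20 / (d * k1) := by rw [hV20]; rfl

/-- Theorem 4(c): Under the hypotheses of Theorem 2, if α₁ is a strictly
increasing continuous class-K function with α₁(|s|) ≤ ∫₀ˢ Ω(τ) dτ for all s, then
α₁(|β(t)|) ≤ V₂(0)/(d·k₁) for all t ≥ 0. -/
theorem theorem4c_beta_bound
    (x y θ z : ℝ → ℝ) (Ω α₁ : ℝ → ℝ) (v d k1 k2 κ ri ro xT yT : ℝ)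
    (hΩcont : Continuous Ω) (hΩ0 : Ω 0 = 0) (hΩpos : ∀ s : ℝ, s ≠ 0 → 0 < s * Ω s)
    (hα₁mono : StrictMonoOn α₁ (Set.Ici 0)) (hα₁cont : ContinuousOn α₁ (Set.Ici 0))
    (hα₁0 : α₁ 0 = 0)
    (hα₁le : ∀ s : ℝ, α₁ |s| ≤ ∫ τ in (0 : ℝ)..s, Ω τ)
    (hv : v ≠ 0) (hri : 0 < ri) (hrid : ri < d) (hdro : d < ro)
    (hk1 : 0 < k1) (hk2 : 0 < k2) (hκ : 0 < κ)
    (hxdiff : ∀ t ≥ (0 : ℝ), DifferentiableAt ℝ x t)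
    (hydiff : ∀ t ≥ (0 : ℝ), DifferentiableAt ℝ y t)
    (hθdiff : ∀ t ≥ (0 : ℝ), DifferentiableAt ℝ θ t)
    (hzdiff : ∀ t ≥ (0 : ℝ), DifferentiableAt ℝ z t)
    (hclosedloop : ∀ t ≥ (0 : ℝ), rng x y xT yT t ∈ Set.Ioo ri ro →
      HasDerivAt x (v * Real.cos (θ t)) t ∧
      HasDerivAt y (v * Real.sin (θ t)) t ∧
      HasDerivAt z (-κ * z t + (1 / 2) * (rng x y xT yT t) ^ 2) t ∧
      HasDerivAt θ (v / d + v * k1 * Ω (beta x y z κ xT yT t) +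
        v * k2 * ((rng x y xT yT t - d) / rng x y xT yT t) *
          eta (d - ri) (ro - d) (rng x y xT yT t - d)) t)
    (hr0 : rng x y xT yT 0 ∈ Set.Ioo ri ro)
    (V20 : ℝ)
    (hV20 : V20 = (1 / 2) * ((ebx x y θ xT yT 0) ^ 2 + (eby x y θ xT yT d 0) ^ 2) +
      d * k2 * Vr (d - ri) (ro - d) (rng x y xT yT 0 - d) +
      d * k1 * ∫ τ in (0 : ℝ)..(beta x y z κ xT yT 0), Ω τ) :
    ∀ t ≥ (0 : ℝ), α₁ |beta x y z κ xT yT t| ≤ V20 / (d * k1) :=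
  theorem4c_beta_bound_general x y θ z Ω α₁ v d k1 k2 κ ri ro xT yT hΩcont hΩ0 hΩpos hα₁le hri hrid
    hdro hk1 hk2 hκ hxdiff hydiff hclosedloop hr0 V20 hV20
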